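/- Let H be a 3-uniform hypergraph on a finite nonempty vertex set V with n = |V| vertices, given by a finite family (e_i)_{i∈I} of 3-element subsets of V (repeats allowed). If H is 2-colorable, then its average degree d̄ = 3|I|/n satisfies d̄ ≤ −(3/2)·λ_min, where λ_min is the smallest eigenvalue of the underlying graph adjacency matrix of H. -/

import Mathlib

open Finset

/-- The underlying graph adjacency matrix of a hypergraph given by the family of hyperedges
`e : I → Finset V`: the entry at `(u, v)` with `u ≠ v` is the number of hyperedges containing
both `u` and `v`, and the diagonal is zero. -/
def underlyingAdj {V I : Type*} [Fintype I] [DecidableEq V] (e : I → Finset V) :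
    Matrix V V ℝ := fun u v =>
  if u = v then 0 else ((Finset.univ.filter fun i => u ∈ e i ∧ v ∈ e i).card : ℝ)

lemma underlyingAdj_isHermitian {V I : Type*} [Fintype I] [DecidableEq V] (e : I → Finset V) :
    (underlyingAdj e).IsHermitian := by
  rw [Matrix.IsHermitian, Matrix.conjTranspose_eq_transpose_of_trivial]
  apply Matrix.IsSymm.ext
  intro i j
  simp only [underlyingAdj, eq_comm (a := j) (b := i)]
  rcases eq_or_ne i j with h | h
  · simp [h]
  · simp only [if_neg h, if_neg h]
    congr 2
    apply Finset.filter_congr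
    intro x _
    simp [and_comm]

/-!
Turn the 2-coloring into a `±1` vector `x`. In a non-monochromatic triple exactly two of the
three pairs are bichromatic, so the triple contributes `2 · (1 - 1 - 1) = -2` to `xᵀ A x`; hence
`xᵀ A x = -2 |I|`, while `xᵀ x = n`. The Rayleigh bound `λ_min · xᵀ x ≤ xᵀ A x` then gives
`3 |I| / n ≤ -(3/2) λ_min`.
-/

open Matrix

open scoped MatrixOrder in
lemma Matrix.IsHermitian.iInf_eigenvalues_mul_dotProduct_self_le {n : Type*} [Fintype n]
    [DecidableEq n] {A : Matrix n n ℝ} (hA : A.IsHermitian) (x : n → ℝ) :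
    (⨅ i, hA.eigenvalues i) * (x ⬝ᵥ x) ≤ x ⬝ᵥ A *ᵥ x := by
  set c := ⨅ i, hA.eigenvalues i
  have hcA : algebraMap ℝ (Matrix n n ℝ) c ≤ A := by
    rw [algebraMap_le_iff_le_spectrum hA.isSelfAdjoint, hA.spectrum_real_eq_range_eigenvalues]
    rintro _ ⟨i, rfl⟩
    exact ciInf_le (Set.finite_range _).bddBelow i
  have hpsd := (le_iff.mp hcA).dotProduct_mulVec_nonneg x
  rw [Algebra.algebraMap_eq_smul_one, sub_mulVec, smul_mulVec, one_mulVec, dotProduct_sub,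
    dotProduct_smul, star_trivial, smul_eq_mul] at hpsd
  linarith

section Hypergraph

variable {V I : Type*}

lemma underlyingAdj_apply [Fintype I] [DecidableEq V] (e : I → Finset V) (u v : V) :
    underlyingAdj e u v = ∑ i, if u ∈ e i ∧ v ∈ e i ∧ u ≠ v then 1 else 0 := by
  by_cases huv : u = v <;> simp [underlyingAdj, huv, Finset.sum_boole]

lemma dotProduct_underlyingAdj_mulVec [Fintype V] [Fintype I] [DecidableEq V]
    (e : I → Finset V) (x : V → ℝ) :
    x ⬝ᵥ underlyingAdj e *ᵥ x = ∑ i, ∑ u ∈ e i, ∑ v ∈ e i, if u = v then 0 else x u * x v := by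
  calc x ⬝ᵥ underlyingAdj e *ᵥ x
      = ∑ u, ∑ v, ∑ i, if u ∈ e i ∧ v ∈ e i ∧ u ≠ v then x u * x v else 0 := by
        simp only [dotProduct, mulVec, underlyingAdj_apply, Finset.mul_sum, Finset.sum_mul]
        refine Fintype.sum_congr _ _ fun u => Fintype.sum_congr _ _ fun v =>
          Fintype.sum_congr _ _ fun i => ?_
        split_ifs <;> ring
    _ = ∑ i, ∑ u, ∑ v, if u ∈ e i ∧ v ∈ e i ∧ u ≠ v then x u * x v else 0 :=
        (Fintype.sum_congr _ _ fun u => Finset.sum_comm).trans Finset.sum_comm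
    _ = _ := by
        simp [ite_and, Finset.sum_ite_mem, ite_not]

def spin (g : V → Bool) (v : V) : ℝ := if g v then 1 else -1

lemma spin_mul_self (g : V → Bool) (v : V) : spin g v * spin g v = 1 := by
  unfold spin
  split_ifs <;> norm_num

lemma sum_offDiag_spin_of_card_eq_three [DecidableEq V] {s : Finset V} (hs : s.card = 3)
    {g : V → Bool} (hg : ∃ u ∈ s, ∃ v ∈ s, g u ≠ g v) :
    ∑ u ∈ s, ∑ v ∈ s, (if u = v then 0 else spin g u * spin g v) = -2 := by
  obtain ⟨a, b, c, hab, hac, hbc, rfl⟩ := Finset.card_eq_three.mp hs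
  simp only [Finset.mem_insert, Finset.mem_singleton, exists_eq_or_imp, exists_eq_left] at hg
  simp only [Finset.sum_insert, Finset.sum_singleton, Finset.mem_insert, Finset.mem_singleton,
    hab, hac, hbc, hab.symm, hac.symm, hbc.symm, or_self, not_false_eq_true, ↓reduceIte]
  unfold spin
  cases ha : g a <;> cases hb : g b <;> cases hc : g c <;> simp_all <;> norm_num

end Hypergraph

/-- If a 3-uniform hypergraph `H` on a nonempty finite vertex set, given by a family
`(e i)_{i : I}` of 3-element subsets, is 2-colorable, then its average degree
`d̄ = 3|I|/n` satisfies `d̄ ≤ -(3/2)·λ_min`, where `λ_min` is the smallest eigenvalue of the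
underlying graph adjacency matrix of `H`. -/
theorem threeUniform_two_colorable {V I : Type*} [Fintype V] [Nonempty V] [DecidableEq V]
    [Fintype I] (e : I → Finset V) (he : ∀ i, (e i).card = 3)
    (hcol : ∃ g : V → Bool, ∀ i, ∃ u ∈ e i, ∃ v ∈ e i, g u ≠ g v) :
    (3 * Fintype.card I : ℝ) / (Fintype.card V : ℝ) ≤
      -(3 / 2) * ⨅ v, (underlyingAdj_isHermitian e).eigenvalues v := by
  obtain ⟨g, hg⟩ := hcol
  have hquad : spin g ⬝ᵥ underlyingAdj e *ᵥ spin g = -2 * Fintype.card I := by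
    simp [dotProduct_underlyingAdj_mulVec, sum_offDiag_spin_of_card_eq_three (he _) (hg _),
      mul_comm]
  have hnorm : spin g ⬝ᵥ spin g = Fintype.card V := by
    simp [dotProduct, spin_mul_self]
  have hray := (underlyingAdj_isHermitian e).iInf_eigenvalues_mul_dotProduct_self_le (spin g)
  rw [hquad, hnorm] at hray
  have hn : (0 : ℝ) < Fintype.card V := Nat.cast_pos.mpr Fintype.card_pos
  rw [div_le_iff₀ hn]
  linarith
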